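/- arXiv:2302.02847 — 4 statements merged into one kernel-verified Lean document; each statement's English description precedes it below -/
import Mathlib

section
/- The uniform law on [-√3, √3] is sharp sub-Gaussian: it is centered with unit variance, and for every real t, ∫ e^{tx} dμ(x) = sinh(√3 t)/(√3 t) ≤ e^{t²/2} (with value 1 at t = 0). -/
open MeasureTheory Real
open scoped ENNReal

/-!
Integrating `e^{tx}` against the uniform law on `[-c, c]` gives `sinh (c t) / (c t)`, whose
Taylor coefficients `1 / (2k+1)!` are dominated termwise by those of `exp ((c t)² / 6)`, namely
`1 / (6^k k!)`. For `c = √3` the bound is `exp (t² / 2)`.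
-/

theorem Nat.six_pow_mul_factorial_le_factorial_two_mul_add_one (n : ℕ) :
    6 ^ n * n.factorial ≤ (2 * n + 1).factorial := by
  induction n with
  | zero => simp
  | succ n ih =>
    calc 6 ^ (n + 1) * (n + 1).factorial = (6 * (n + 1)) * (6 ^ n * n.factorial) := by
          rw [Nat.factorial_succ]; ring
      _ ≤ ((2 * n + 3) * (2 * n + 2)) * (2 * n + 1).factorial := Nat.mul_le_mul (by nlinarith) ih
      _ = (2 * (n + 1) + 1).factorial := by
          rw [show 2 * (n + 1) + 1 = 2 * n + 2 + 1 by ring, Nat.factorial_succ (2 * n + 2),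
            Nat.factorial_succ (2 * n + 1)]
          ring

namespace Real

theorem hasSum_sinh_div {x : ℝ} (hx : x ≠ 0) :
    HasSum (fun n : ℕ ↦ x ^ (2 * n) / (2 * n + 1).factorial) (sinh x / x) := by
  refine ((hasSum_sinh x).div_const x).congr_fun fun n ↦ ?_
  field_simp
  ring

theorem sinh_div_le_exp_sq_div_six (x : ℝ) : sinh x / x ≤ exp (x ^ 2 / 6) := by
  rcases eq_or_ne x 0 with rfl | hx
  · simp
  refine hasSum_le (fun n ↦ ?_) (hasSum_sinh_div hx)
    (by rw [exp_eq_exp_ℝ]; exact NormedSpace.expSeries_div_hasSum_exp (x ^ 2 / 6))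
  rw [div_pow, ← pow_mul, div_div]
  gcongr
  · exact (even_two_mul n).pow_nonneg x
  · exact_mod_cast Nat.six_pow_mul_factorial_le_factorial_two_mul_add_one n

end Real

noncomputable def symmUniform (c : ℝ) : Measure ℝ :=
  (ENNReal.ofReal (2 * c))⁻¹ • volume.restrict (Set.Icc (-c) c)

section symmUniform

variable {c : ℝ}

theorem isProbabilityMeasure_symmUniform (hc : 0 < c) : IsProbabilityMeasure (symmUniform c) := by
  constructor
  rw [symmUniform, Measure.smul_apply, Measure.restrict_apply_univ, Real.volume_Icc, smul_eq_mul,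
    sub_neg_eq_add, ← two_mul]
  exact ENNReal.inv_mul_cancel (by simpa using hc) ENNReal.ofReal_ne_top

theorem integral_symmUniform (hc : 0 ≤ c) (f : ℝ → ℝ) :
    ∫ x, f x ∂symmUniform c = (2 * c)⁻¹ * ∫ x in -c..c, f x := by
  rw [symmUniform, integral_smul_measure, ENNReal.toReal_inv, ENNReal.toReal_ofReal (by linarith),
    smul_eq_mul, integral_Icc_eq_integral_Ioc, ← intervalIntegral.integral_of_le (by linarith)]

theorem integral_id_symmUniform (hc : 0 ≤ c) : ∫ x, x ∂symmUniform c = 0 := by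
  rw [integral_symmUniform hc, integral_id]
  ring

theorem integral_sq_symmUniform (hc : 0 < c) : ∫ x, x ^ 2 ∂symmUniform c = c ^ 2 / 3 := by
  rw [integral_symmUniform hc.le, integral_pow]
  field_simp
  ring

theorem integral_exp_mul_symmUniform (hc : 0 < c) {t : ℝ} (ht : t ≠ 0) :
    ∫ x, exp (t * x) ∂symmUniform c = sinh (c * t) / (c * t) := by
  rw [integral_symmUniform hc.le, intervalIntegral.integral_comp_mul_left _ ht, integral_exp,
    sinh_eq, smul_eq_mul, mul_neg, mul_comm t c]
  field_simp

theorem integral_exp_mul_symmUniform_le (hc : 0 < c) (t : ℝ) :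
    ∫ x, exp (t * x) ∂symmUniform c ≤ exp ((c * t) ^ 2 / 6) := by
  rcases eq_or_ne t 0 with rfl | ht
  · have := isProbabilityMeasure_symmUniform hc
    simp
  · rw [integral_exp_mul_symmUniform hc ht]
    exact sinh_div_le_exp_sq_div_six _

end symmUniform

/-- The uniform law on `[-√3, √3]` is sharp sub-Gaussian: it is centered with unit
variance, and for every real `t`, `∫ e^{tx} dμ(x) = sinh(√3 t)/(√3 t) ≤ e^{t²/2}`
(with value `1` at `t = 0`). -/
theorem uniform_sharp_subGaussian
    (μ : Measure ℝ)
    (hμ : μ = (ENNReal.ofReal (2 * Real.sqrt 3))⁻¹ •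
      (volume.restrict (Set.Icc (-Real.sqrt 3) (Real.sqrt 3)))) :
    (∫ x, x ∂μ) = 0 ∧ (∫ x, x ^ 2 ∂μ) = 1 ∧
      ∀ t : ℝ,
        (t ≠ 0 → (∫ x, Real.exp (t * x) ∂μ)
          = Real.sinh (Real.sqrt 3 * t) / (Real.sqrt 3 * t)) ∧
        (t = 0 → (∫ x, Real.exp (t * x) ∂μ) = 1) ∧
        (∫ x, Real.exp (t * x) ∂μ) ≤ Real.exp (t ^ 2 / 2) := by
  replace hμ : μ = symmUniform √3 := hμ
  subst hμ
  have hc : 0 < √3 := by positivity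
  have hsq : √3 ^ 2 = 3 := sq_sqrt (by norm_num)
  have := isProbabilityMeasure_symmUniform hc
  refine ⟨integral_id_symmUniform hc.le, by rw [integral_sq_symmUniform hc, hsq]; norm_num,
    fun t ↦ ⟨integral_exp_mul_symmUniform hc, fun ht ↦ by simp [ht], ?_⟩⟩
  convert integral_exp_mul_symmUniform_le hc t using 2
  rw [mul_pow, hsq]
  ring
end

section
/- Let ρ be a compactly supported probability measure on ℝ and α > 0 with θ_max := α / r(ρ) if r(ρ) > 0 and θ_max := +∞ otherwise, where r(ρ) is the right endpoint of the support. Define f_ρ(θ) = -1 + α ∫ u²θ² / (α - uθ)² ρ(du) for θ ∈ (0, θ_max). Then f_ρ is strictly increasing on (0, θ_max), provided ρ is not the point mass at 0. -/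
open MeasureTheory Real
open scoped ENNReal

/-- Let `ρ` be a compactly supported probability measure on `ℝ` with right endpoint
of the support `r`, `α > 0`, and `θ_max = α/r` if `r > 0` and `+∞` otherwise. Then
`f_ρ(θ) = -1 + α ∫ u²θ²/(α - uθ)² ρ(du)` is strictly increasing on `(0, θ_max)`,
provided `ρ` is not the point mass at `0`. -/
theorem f_rho_strictMono
    (ρ : Measure ℝ) [IsProbabilityMeasure ρ] (α : ℝ) (hα : 0 < α)
    (R : ℝ) (hlb : ρ (Set.Iio (-R)) = 0)
    (r : ℝ) (hub : ρ (Set.Ioi r) = 0) (hr : ∀ ε > 0, 0 < ρ (Set.Ioc (r - ε) r))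
    (hρ : ρ ≠ Measure.dirac (0 : ℝ))
    (f : ℝ → ℝ)
    (hf : f = fun θ => -1 + α * ∫ u, u ^ 2 * θ ^ 2 / (α - u * θ) ^ 2 ∂ρ) :
    ∀ θ₁ θ₂ : ℝ, 0 < θ₁ → θ₁ < θ₂ → (0 < r → θ₂ < α / r) → f θ₁ < f θ₂ := by
  -- a.e., u ∈ [-R, r]
  have hae : ∀ᵐ u ∂ρ, u ∈ Set.Icc (-R) r := by
    have h0 : ρ (Set.Iio (-R) ∪ Set.Ioi r) = 0 := measure_union_null hlb hub
    have := (measure_eq_zero_iff_ae_notMem).mp h0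
    filter_upwards [this] with u hu
    simp only [Set.mem_union, Set.mem_Iio, Set.mem_Ioi, not_or, not_lt] at hu
    exact ⟨hu.1, hu.2⟩
  -- positivity of the denominator
  have key : ∀ θ : ℝ, 0 < θ → (0 < r → θ < α / r) → ∀ u : ℝ, u ≤ r →
      0 < α - u * θ := by
    intro θ hθ hθr u hu
    rcases le_or_gt u 0 with h | h
    · nlinarith
    · have hr0 : 0 < r := lt_of_lt_of_le h hu
      have h1 : θ * r < α := (lt_div_iff₀ hr0).mp (hθr hr0)
      nlinarith
  -- integrability
  have integ : ∀ θ : ℝ, 0 < θ → (0 < r → θ < α / r) →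
      Integrable (fun u => u ^ 2 * θ ^ 2 / (α - u * θ) ^ 2) ρ := by
    intro θ hθ hθr
    set c := α - max r 0 * θ with hc
    have hcpos : 0 < c := by
      rcases le_or_gt r 0 with h | h
      · simp [hc, max_eq_right h, hα]
      · have h1 : θ * r < α := (lt_div_iff₀ h).mp (hθr h)
        rw [hc, max_eq_left h.le]; nlinarith
    set M := max |R| |r| with hM
    refine Integrable.mono' (integrable_const (M ^ 2 * θ ^ 2 / c ^ 2)) ?_ ?_
    · exact Measurable.aestronglyMeasurable (by fun_prop)
    · filter_upwards [hae] with u hu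
      have hden : c ≤ α - u * θ := by
        rcases le_or_gt u 0 with h | h
        · have : (0:ℝ) ≤ max r 0 * θ := mul_nonneg (le_max_right r 0) hθ.le
          nlinarith
        · have h2 : u ≤ max r 0 := le_trans hu.2 (le_max_left _ _)
          have : u * θ ≤ max r 0 * θ := mul_le_mul_of_nonneg_right h2 hθ.le
          linarith
      have habs : |u| ≤ M := by
        rw [abs_le]
        constructor
        · have h1 : -|R| ≤ -R := neg_le_neg (le_abs_self R)
          linarith [hu.1, le_max_left |R| |r|]
        · exact le_trans hu.2 (le_trans (le_abs_self r) (le_max_right _ _))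
      have hu2 : u ^ 2 ≤ M ^ 2 := by
        have := abs_nonneg u
        nlinarith [sq_abs u]
      rw [Real.norm_eq_abs, abs_of_nonneg (by positivity)]
      exact div_le_div₀ (by positivity)
        (by nlinarith [sq_nonneg θ]) (by positivity) (by nlinarith)
  -- strict pointwise monotonicity for u ≠ 0
  intro θ₁ θ₂ hθ₁ h12 hθ₂r
  have hθ₂ : 0 < θ₂ := hθ₁.trans h12
  have hθ₁r : 0 < r → θ₁ < α / r := fun hr0 => h12.trans (hθ₂r hr0)
  have strict : ∀ u : ℝ, u ≤ r → u ≠ 0 →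
      u ^ 2 * θ₁ ^ 2 / (α - u * θ₁) ^ 2 < u ^ 2 * θ₂ ^ 2 / (α - u * θ₂) ^ 2 := by
    intro u hu hu0
    have a1 : 0 < α - u * θ₁ := key θ₁ hθ₁ hθ₁r u hu
    have a2 : 0 < α - u * θ₂ := key θ₂ hθ₂ hθ₂r u hu
    rw [div_lt_div_iff₀ (by positivity) (by positivity)]
    have hu2 : 0 < u ^ 2 := by positivity
    have hxy : θ₁ * (α - u * θ₂) < θ₂ * (α - u * θ₁) := by nlinarith
    have hsq : (θ₁ * (α - u * θ₂)) ^ 2 < (θ₂ * (α - u * θ₁)) ^ 2 := by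
      apply sq_lt_sq' <;> nlinarith [mul_pos hθ₁ a2, mul_pos hθ₂ a1]
    calc u ^ 2 * θ₁ ^ 2 * (α - u * θ₂) ^ 2 = u ^ 2 * (θ₁ * (α - u * θ₂)) ^ 2 := by ring
      _ < u ^ 2 * (θ₂ * (α - u * θ₁)) ^ 2 := by exact mul_lt_mul_of_pos_left hsq hu2
      _ = u ^ 2 * θ₂ ^ 2 * (α - u * θ₁) ^ 2 := by ring
  -- ρ({0}ᶜ) > 0
  have h0c : 0 < ρ {(0:ℝ)}ᶜ := by
    rcases eq_or_ne (ρ {(0:ℝ)}ᶜ) 0 with h0 | h0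
    · exfalso
      apply hρ
      have h1 : ρ {(0:ℝ)} = 1 := by
        have hcompl := measure_compl (measurableSet_singleton (0:ℝ)) (measure_ne_top ρ _)
        rw [h0, measure_univ] at hcompl
        have hle : (1:ℝ≥0∞) ≤ ρ {(0:ℝ)} := by
          by_contra hlt
          push_neg at hlt
          rw [eq_comm, tsub_eq_zero_iff_le] at hcompl
          exact absurd hcompl (not_le.mpr hlt)
        exact le_antisymm prob_le_one hle
      refine Measure.ext fun s hs => ?_
      rw [Measure.dirac_apply' _ hs]
      have hdiff : ρ (s \ {0}) = 0 :=
        measure_mono_null (Set.diff_subset_compl s {0}) h0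
      have hsplit := measure_inter_add_diff (μ := ρ) s (measurableSet_singleton (0:ℝ))
      rw [hdiff, add_zero] at hsplit
      by_cases h0s : (0:ℝ) ∈ s
      · have : s ∩ {(0:ℝ)} = {(0:ℝ)} :=
          Set.inter_eq_self_of_subset_right (Set.singleton_subset_iff.mpr h0s)
        rw [← hsplit, this, h1, Set.indicator_of_mem h0s]; rfl
      · have : s ∩ {(0:ℝ)} = ∅ := Set.inter_singleton_eq_empty.mpr h0s
        rw [← hsplit, this, measure_empty, Set.indicator_of_notMem h0s]
    · exact pos_iff_ne_zero.mpr h0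
  -- the integral of the difference is positive
  have I1 := integ θ₁ hθ₁ hθ₁r
  have I2 := integ θ₂ hθ₂ hθ₂r
  set g₁ : ℝ → ℝ := fun u => u ^ 2 * θ₁ ^ 2 / (α - u * θ₁) ^ 2 with hg₁
  set g₂ : ℝ → ℝ := fun u => u ^ 2 * θ₂ ^ 2 / (α - u * θ₂) ^ 2 with hg₂
  have hd_int : Integrable (fun u => g₂ u - g₁ u) ρ := I2.sub I1
  have hnonneg : 0 ≤ᵐ[ρ] fun u => g₂ u - g₁ u := by
    filter_upwards [hae] with u hu
    rcases eq_or_ne u 0 with h | h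
    · simp [hg₁, hg₂, h]
    · exact sub_nonneg.mpr (strict u hu.2 h).le
  have hpos : 0 < ∫ u, (g₂ u - g₁ u) ∂ρ := by
    rw [integral_pos_iff_support_of_nonneg_ae hnonneg hd_int]
    have hsub : Set.Iic r \ {0} ⊆ Function.support fun u => g₂ u - g₁ u := by
      intro u hu
      exact ne_of_gt (sub_pos.mpr (strict u hu.1 hu.2))
    have hle : ρ {(0:ℝ)}ᶜ ≤ ρ (Set.Iic r \ {0}) := by
      have hss : {(0:ℝ)}ᶜ ⊆ (Set.Iic r \ {0}) ∪ Set.Ioi r := by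
        intro u hu
        rcases le_or_gt u r with h | h
        · exact Or.inl ⟨h, hu⟩
        · exact Or.inr h
      calc ρ {(0:ℝ)}ᶜ ≤ ρ ((Set.Iic r \ {0}) ∪ Set.Ioi r) := measure_mono hss
        _ ≤ ρ (Set.Iic r \ {0}) + ρ (Set.Ioi r) := measure_union_le _ _
        _ = ρ (Set.Iic r \ {0}) := by rw [hub, add_zero]
    exact lt_of_lt_of_le (lt_of_lt_of_le h0c hle) (measure_mono hsub)
  rw [integral_sub I2 I1] at hpos
  subst hf
  simp only
  have : ∫ u, g₁ u ∂ρ < ∫ u, g₂ u ∂ρ := by linarith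
  nlinarith [this]
end

section
/- Let ρ be a compactly supported probability measure on ℝ with r(ρ) ≤ 0 and ρ({0}) = 0, and let α > 1. Define H_ρ(θ) = 1/θ + ∫ αu/(α - θu) ρ(du) for θ > 0. Then H_ρ(θ) = (1 - α)/θ + o(1/θ) as θ → +∞; in particular H_ρ(θ) < 0 for all sufficiently large θ. -/
open MeasureTheory Real Filter Asymptotics
open scoped ENNReal Topology

/-!
For `θ > 0` and `u < 0` one has the partial fraction identity
`αu/(α - θu) = -α/θ + (α²/θ) (α - θu)⁻¹`, so integrating against the probability measure `ρ`
gives `H_ρ(θ) - (1 - α)/θ = (α²/θ) ∫ (α - θu)⁻¹ ρ(du)`. The integrand is bounded by `α⁻¹` and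
tends to `0` pointwise since `ρ` lives on `(-∞, 0)`, so the integral tends to `0` by dominated
convergence.
-/

lemma ae_lt_zero_of_measure_Ioi_eq_zero {ρ : Measure ℝ} (hub : ρ (Set.Ioi 0) = 0)
    (h0 : ρ {(0 : ℝ)} = 0) : ∀ᵐ u ∂ρ, u < 0 := by
  have hle : ∀ᵐ u ∂ρ, u ≤ 0 := ae_iff.2 (by simp only [not_le]; exact hub)
  have hne : ∀ᵐ u ∂ρ, u ≠ 0 := ae_iff.2 (by simp only [ne_eq, not_not]; exact h0)
  filter_upwards [hle, hne] with u hle hne using lt_of_le_of_ne hle hne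

lemma norm_inv_sub_mul_le {α θ u : ℝ} (hα : 0 < α) (hθ : 0 ≤ θ) (hu : u ≤ 0) :
    ‖(α - θ * u)⁻¹‖ ≤ α⁻¹ := by
  have hle : α ≤ α - θ * u := by nlinarith
  rw [Real.norm_eq_abs, abs_of_pos (inv_pos.mpr (hα.trans_le hle))]
  exact inv_anti₀ hα hle

lemma mul_div_sub_mul_eq {α θ u : ℝ} (hθ : θ ≠ 0) (h : α - θ * u ≠ 0) :
    α * u / (α - θ * u) = -(α / θ) + α ^ 2 / θ * (α - θ * u)⁻¹ := by
  rw [← div_eq_mul_inv, div_div, neg_add_eq_sub, div_sub_div _ _ (mul_ne_zero hθ h) hθ,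
    div_eq_div_iff h (mul_ne_zero (mul_ne_zero hθ h) hθ)]
  ring

section

variable {ρ : Measure ℝ} {α : ℝ}

lemma integrable_inv_sub_mul [IsFiniteMeasure ρ] (hα : 0 < α) {θ : ℝ} (hθ : 0 ≤ θ)
    (hneg : ∀ᵐ u ∂ρ, u ≤ 0) : Integrable (fun u => (α - θ * u)⁻¹) ρ :=
  (integrable_const α⁻¹).mono' (by fun_prop)
    (by filter_upwards [hneg] with u hu using norm_inv_sub_mul_le hα hθ hu)

lemma tendsto_integral_inv_sub_mul [IsFiniteMeasure ρ] (hα : 0 < α) (hneg : ∀ᵐ u ∂ρ, u < 0) :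
    Tendsto (fun θ => ∫ u, (α - θ * u)⁻¹ ∂ρ) atTop (𝓝 0) := by
  have hlim : ∀ᵐ u ∂ρ, Tendsto (fun θ : ℝ => (α - θ * u)⁻¹) atTop (𝓝 0) := by
    filter_upwards [hneg] with u hu
    have hden : Tendsto (fun θ : ℝ => α - θ * u) atTop atTop := by
      simpa only [id, mul_neg, ← sub_eq_add_neg] using
        tendsto_atTop_add_const_left _ α (tendsto_id.atTop_mul_const (neg_pos.mpr hu))
    exact hden.inv_tendsto_atTop
  simpa only [integral_zero] using tendsto_integral_filter_of_dominated_convergence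
    (fun _ => α⁻¹) (Eventually.of_forall fun θ => by fun_prop)
    (by
      filter_upwards [eventually_ge_atTop 0] with θ hθ
      filter_upwards [hneg] with u hu using norm_inv_sub_mul_le hα hθ hu.le)
    (integrable_const _) hlim

lemma integral_mul_div_sub_mul [IsProbabilityMeasure ρ] (hα : 0 < α) {θ : ℝ} (hθ : 0 < θ)
    (hneg : ∀ᵐ u ∂ρ, u ≤ 0) :
    ∫ u, α * u / (α - θ * u) ∂ρ = -(α / θ) + α ^ 2 / θ * ∫ u, (α - θ * u)⁻¹ ∂ρ := by
  rw [integral_congr_ae (g := fun u => -(α / θ) + α ^ 2 / θ * (α - θ * u)⁻¹), integral_add,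
    integral_const, integral_const_mul, probReal_univ, one_smul]
  · exact integrable_const _
  · exact (integrable_inv_sub_mul hα hθ.le hneg).const_mul _
  · filter_upwards [hneg] with u hu
    exact mul_div_sub_mul_eq hθ.ne' (by nlinarith)

end

lemma eventually_neg_of_isLittleO_inv {f : ℝ → ℝ} {c : ℝ} (hc : c < 0)
    (h : (fun θ => f θ - c / θ) =o[atTop] (fun θ => 1 / θ)) : ∀ᶠ θ in atTop, f θ < 0 := by
  filter_upwards [h.bound (by linarith : 0 < -c / 2), eventually_gt_atTop 0] with θ hbound hθ
  rw [Real.norm_eq_abs, Real.norm_eq_abs, abs_of_pos (one_div_pos.mpr hθ)] at hbound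
  have hsum : c / θ + -c / 2 * (1 / θ) = c / (2 * θ) := by
    field_simp
    ring
  have hneg : c / (2 * θ) < 0 := div_neg_of_neg_of_pos hc (by positivity)
  linarith [(abs_le.mp hbound).2]

theorem H_rho_asymptotics_atTop_general
    (ρ : Measure ℝ) [IsProbabilityMeasure ρ] (α : ℝ) (hα : 1 < α)
    (hub : ρ (Set.Ioi 0) = 0) (h0 : ρ {(0 : ℝ)} = 0)
    (H : ℝ → ℝ)
    (hH : H = fun θ => 1 / θ + ∫ u, α * u / (α - θ * u) ∂ρ) :
    (fun θ => H θ - (1 - α) / θ) =o[atTop] (fun θ => 1 / θ) ∧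
      ∀ᶠ θ in atTop, H θ < 0 := by
  have hα0 : 0 < α := one_pos.trans hα
  have hneg := ae_lt_zero_of_measure_Ioi_eq_zero hub h0
  have hI : Tendsto (fun θ => α ^ 2 * ∫ u, (α - θ * u)⁻¹ ∂ρ) atTop (𝓝 0) := by
    simpa only [mul_zero] using (tendsto_integral_inv_sub_mul hα0 hneg).const_mul (α ^ 2)
  have hlo : (fun θ => H θ - (1 - α) / θ) =o[atTop] (fun θ => 1 / θ) := by
    refine (((isLittleO_one_iff ℝ).2 hI).mul_isBigO (isBigO_refl (fun θ : ℝ => 1 / θ) _)).congr'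
      ?_ (.of_eq (funext fun _ => one_mul _))
    filter_upwards [eventually_gt_atTop 0] with θ hθ
    rw [hH]
    dsimp only
    rw [integral_mul_div_sub_mul hα0 hθ (hneg.mono fun _ => le_of_lt)]
    field_simp
    ring
  exact ⟨hlo, eventually_neg_of_isLittleO_inv (by linarith) hlo⟩

/-- Let `ρ` be a compactly supported probability measure on `ℝ` with `r(ρ) ≤ 0` and
`ρ({0}) = 0`, and let `α > 1`. With `H_ρ(θ) = 1/θ + ∫ αu/(α - θu) ρ(du)` for `θ > 0`,
we have `H_ρ(θ) = (1 - α)/θ + o(1/θ)` as `θ → +∞`; in particular `H_ρ(θ) < 0` for all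
sufficiently large `θ`. -/
theorem H_rho_asymptotics_atTop
    (ρ : Measure ℝ) [IsProbabilityMeasure ρ] (α : ℝ) (hα : 1 < α)
    (R : ℝ) (hlb : ρ (Set.Iio (-R)) = 0)
    (hub : ρ (Set.Ioi 0) = 0) (h0 : ρ {(0 : ℝ)} = 0)
    (H : ℝ → ℝ)
    (hH : H = fun θ => 1 / θ + ∫ u, α * u / (α - θ * u) ∂ρ) :
    (fun θ => H θ - (1 - α) / θ) =o[atTop] (fun θ => 1 / θ) ∧
      ∀ᶠ θ in atTop, H θ < 0 :=
  H_rho_asymptotics_atTop_general ρ α hα hub h0 H hH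
end

section
/- Let A, B be N×N real symmetric matrices with eigenvalues λ₁(A) ≤ ... ≤ λ_N(A) and similarly for B, and let f : ℝ → ℝ be 1-Lipschitz. Then |(1/N)∑ᵢ f(λᵢ(A)) - (1/N)∑ᵢ f(λᵢ(B))| ≤ (1/N) ∑ᵢ |σᵢ(A - B)|, where σᵢ(A-B) denote the singular values of A - B (i.e., the bound is (1/N) times the trace norm of A - B). -/
/-!
Write `A - B = P - Q` with `P = (A - B)⁺` and `Q = (A - B)⁻` positive semidefinite, so that
`M := B + P = A + Q` dominates both `A` and `B`. By Weyl's monotonicity (a Courant–Fischer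
dimension count) the sorted eigenvalues satisfy `λₖ(A), λₖ(B) ≤ λₖ(M)`, hence
`|λₖ(A) - λₖ(B)| ≤ (λₖ(M) - λₖ(A)) + (λₖ(M) - λₖ(B))`. Summing over `k` gives
`tr Q + tr P = tr |A - B|`, and the Lipschitz bound on `f` does the rest.
-/

open Module Submodule

open scoped InnerProductSpace

theorem Submodule.exists_mem_inf_ne_zero_of_finrank_lt_add {K V : Type*} [DivisionRing K]
    [AddCommGroup V] [Module K V] [FiniteDimensional K V] {p q : Submodule K V}
    (h : finrank K V < finrank K p + finrank K q) : ∃ x ∈ p ⊓ q, x ≠ 0 := by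
  refine exists_mem_ne_zero_of_ne_bot fun hpq => ?_
  have := finrank_sup_add_finrank_inf_eq p q
  have := (p ⊔ q).finrank_le
  rw [hpq, finrank_bot] at *
  omega

namespace OrthonormalBasis

variable {ι 𝕜 E : Type*} [Fintype ι] [RCLike 𝕜] [NormedAddCommGroup E] [InnerProductSpace 𝕜 E]

theorem finrank_span_image (b : OrthonormalBasis ι 𝕜 E) (s : Finset ι) :
    finrank 𝕜 (span 𝕜 (b '' s)) = s.card := by
  rw [Set.image_eq_range]
  exact (finrank_span_eq_card (b.orthonormal.linearIndependent.comp _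
    Subtype.val_injective)).trans (Fintype.card_coe s)

theorem inner_eq_zero_of_mem_span_image (b : OrthonormalBasis ι 𝕜 E) {s : Set ι} {x : E}
    (hx : x ∈ span 𝕜 (b '' s)) {i : ι} (hi : i ∉ s) : ⟪b i, x⟫_𝕜 = 0 := by
  rw [← b.repr_apply_apply, ← b.coe_toBasis_repr_apply]
  by_contra h
  exact hi ((b.toBasis.mem_span_image.mp (by rwa [b.coe_toBasis])) (Finsupp.mem_support_iff.mpr h))

end OrthonormalBasis

namespace LinearMap.IsSymmetric

variable {𝕜 E : Type*} [RCLike 𝕜] [NormedAddCommGroup E] [InnerProductSpace 𝕜 E]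
  [FiniteDimensional 𝕜 E] {T : E →ₗ[𝕜] E} {n : ℕ} (hT : T.IsSymmetric) (hn : finrank 𝕜 E = n)

theorem re_inner_apply_self_eq_sum (x : E) :
    RCLike.re ⟪T x, x⟫_𝕜 =
      ∑ i, hT.eigenvalues hn i * ‖⟪hT.eigenvectorBasis hn i, x⟫_𝕜‖ ^ 2 := by
  rw [← (hT.eigenvectorBasis hn).sum_inner_mul_inner, map_sum]
  refine Finset.sum_congr rfl fun i _ => ?_
  rw [hT, apply_eigenvectorBasis, inner_smul_right, ← inner_conj_symm x, mul_assoc,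
    RCLike.conj_mul]
  norm_cast

theorem eigenvalues_mul_norm_sq_le_re_inner {k : Fin n} {x : E}
    (hx : ∀ i, k < i → ⟪hT.eigenvectorBasis hn i, x⟫_𝕜 = 0) :
    hT.eigenvalues hn k * ‖x‖ ^ 2 ≤ RCLike.re ⟪T x, x⟫_𝕜 := by
  rw [hT.re_inner_apply_self_eq_sum hn, ← (hT.eigenvectorBasis hn).sum_sq_norm_inner_right,
    Finset.mul_sum]
  refine Finset.sum_le_sum fun i _ => ?_
  rcases le_or_gt i k with hik | hki
  · exact mul_le_mul_of_nonneg_right (hT.eigenvalues_antitone hn hik) (by positivity)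
  · simp [hx i hki]

theorem re_inner_le_eigenvalues_mul_norm_sq {k : Fin n} {x : E}
    (hx : ∀ i, i < k → ⟪hT.eigenvectorBasis hn i, x⟫_𝕜 = 0) :
    RCLike.re ⟪T x, x⟫_𝕜 ≤ hT.eigenvalues hn k * ‖x‖ ^ 2 := by
  rw [hT.re_inner_apply_self_eq_sum hn, ← (hT.eigenvectorBasis hn).sum_sq_norm_inner_right,
    Finset.mul_sum]
  refine Finset.sum_le_sum fun i _ => ?_
  rcases lt_or_ge i k with hik | hki
  · simp [hx i hik]
  · exact mul_le_mul_of_nonneg_right (hT.eigenvalues_antitone hn hki) (by positivity)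

theorem eigenvalues_le_of_le {T' : E →ₗ[𝕜] E} (hT' : T'.IsSymmetric) (h : T ≤ T') (k : Fin n) :
    hT.eigenvalues hn k ≤ hT'.eigenvalues hn k := by
  set b := hT.eigenvectorBasis hn
  set b' := hT'.eigenvectorBasis hn
  -- Eigenvalues are sorted decreasingly, so `T ≥ λₖ(T)` on the first span and
  -- `T' ≤ λₖ(T')` on the second; their dimensions `k + 1` and `n - k` force an intersection.
  obtain ⟨x, ⟨hxV, hxW⟩, hx0⟩ := exists_mem_inf_ne_zero_of_finrank_lt_add
    (p := span 𝕜 (b '' (Finset.Iic k : Set (Fin n))))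
    (q := span 𝕜 (b' '' (Finset.Ici k : Set (Fin n)))) (by
      rw [b.finrank_span_image, b'.finrank_span_image, Fin.card_Iic, Fin.card_Ici, hn]
      omega)
  have hlow := hT.eigenvalues_mul_norm_sq_le_re_inner hn (k := k) (x := x) fun i hki =>
    b.inner_eq_zero_of_mem_span_image hxV (by simpa using hki)
  have hup := hT'.re_inner_le_eigenvalues_mul_norm_sq hn (k := k) (x := x) fun i hik =>
    b'.inner_eq_zero_of_mem_span_image hxW (by simpa using hik)
  have hmid : RCLike.re ⟪T x, x⟫_𝕜 ≤ RCLike.re ⟪T' x, x⟫_𝕜 := by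
    have := h.2 x
    rwa [sub_apply, inner_sub_left, map_sub, sub_nonneg] at this
  exact le_of_mul_le_mul_right (hlow.trans (hmid.trans hup)) (by positivity)

end LinearMap.IsSymmetric

namespace Matrix.IsHermitian

open scoped MatrixOrder

variable {𝕜 n : Type*} [RCLike 𝕜] [Fintype n] [DecidableEq n] {A B M : Matrix n n 𝕜}

theorem eigenvalues₀_le_of_le (hA : A.IsHermitian) (hB : B.IsHermitian) (h : A ≤ B)
    (k : Fin (Fintype.card n)) : hA.eigenvalues₀ k ≤ hB.eigenvalues₀ k :=
  LinearMap.IsSymmetric.eigenvalues_le_of_le _ _ _ (by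
    rwa [LinearMap.le_def, ← map_sub, isPositive_toEuclideanLin_iff]) k

-- `eigenvalues` is the sorted `eigenvalues₀` reindexed along an arbitrary `n ≃ Fin (card n)`.
theorem sum_comp_eigenvalues (hA : A.IsHermitian) (g : ℝ → ℝ) :
    ∑ i, g (hA.eigenvalues i) = ∑ k, g (hA.eigenvalues₀ k) :=
  Equiv.sum_comp (Fintype.equivOfCardEq (Fintype.card_fin _)).symm (g ∘ hA.eigenvalues₀)

theorem re_trace_eq_sum_eigenvalues₀ (hA : A.IsHermitian) :
    RCLike.re A.trace = ∑ k, hA.eigenvalues₀ k := by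
  rw [hA.trace_eq_sum_eigenvalues, map_sum]
  simpa using hA.sum_comp_eigenvalues id

theorem trace_cfc (hA : A.IsHermitian) (f : ℝ → ℝ) :
    (cfc f A).trace = ∑ i, (f (hA.eigenvalues i) : 𝕜) := by
  rw [cfc_eq hA, IsHermitian.cfc, Unitary.conjStarAlgAut_apply, trace_mul_cycle,
    Unitary.coe_star_mul_self, one_mul, trace_diagonal]
  rfl

theorem re_trace_abs (hA : A.IsHermitian) :
    RCLike.re (CFC.abs A).trace = ∑ i, |hA.eigenvalues i| := by
  rw [CFC.abs_eq_cfc_norm A hA.isSelfAdjoint, hA.trace_cfc, map_sum]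
  simp

theorem sum_abs_sub_eigenvalues₀_le_of_le (hA : A.IsHermitian) (hB : B.IsHermitian)
    (hM : M.IsHermitian) (hAM : A ≤ M) (hBM : B ≤ M) :
    ∑ k, |hA.eigenvalues₀ k - hB.eigenvalues₀ k| ≤
      RCLike.re (M - A).trace + RCLike.re (M - B).trace := by
  rw [trace_sub, trace_sub, map_sub, map_sub, hA.re_trace_eq_sum_eigenvalues₀,
    hB.re_trace_eq_sum_eigenvalues₀, hM.re_trace_eq_sum_eigenvalues₀, ← Finset.sum_sub_distrib,
    ← Finset.sum_sub_distrib, ← Finset.sum_add_distrib]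
  refine Finset.sum_le_sum fun k _ => abs_sub_le_iff.mpr ⟨?_, ?_⟩
  all_goals linarith [hA.eigenvalues₀_le_of_le hM hAM k, hB.eigenvalues₀_le_of_le hM hBM k]

theorem sum_abs_sub_eigenvalues₀_le (hA : A.IsHermitian) (hB : B.IsHermitian) :
    ∑ k, |hA.eigenvalues₀ k - hB.eigenvalues₀ k| ≤ ∑ i, |(hA.sub hB).eigenvalues i| := by
  set C := A - B
  have hPQ : C⁺ - C⁻ = C := CFC.posPart_sub_negPart C (hA.sub hB).isSelfAdjoint
  have hM : B + C⁺ = A + C⁻ := by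
    calc B + C⁺ = B + (C⁺ - C⁻) + C⁻ := by abel
      _ = A + C⁻ := by rw [hPQ, add_sub_cancel]
  have hP := CFC.posPart_nonneg C
  have hQ := CFC.negPart_nonneg C
  have := sum_abs_sub_eigenvalues₀_le_of_le hA hB (hB.add hP.isSelfAdjoint)
    (hM ▸ le_add_of_nonneg_right hQ) (le_add_of_nonneg_right hP)
  rwa [hM, add_sub_cancel_left, ← hM, add_sub_cancel_left, ← map_add, ← trace_add, add_comm,
    CFC.posPart_add_negPart C (hA.sub hB).isSelfAdjoint, (hA.sub hB).re_trace_abs] at this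

end Matrix.IsHermitian

/-- For real symmetric `N×N` matrices `A, B` and a `1`-Lipschitz `f : ℝ → ℝ`,
`|(1/N)∑ f(λᵢ(A)) - (1/N)∑ f(λᵢ(B))| ≤ (1/N)∑ |λᵢ(A-B)|`, the right side being
`(1/N)` times the trace norm of `A - B` (whose singular values are the absolute
values of its eigenvalues since `A - B` is symmetric). -/
theorem lipschitz_linear_statistic_traceNorm
    {N : ℕ} (A B : Matrix (Fin N) (Fin N) ℝ)
    (hA : A.IsHermitian) (hB : B.IsHermitian)
    (f : ℝ → ℝ) (hf : LipschitzWith 1 f) :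
    |(1 / (N : ℝ)) * (∑ i, f (hA.eigenvalues i))
        - (1 / (N : ℝ)) * (∑ i, f (hB.eigenvalues i))|
      ≤ (1 / (N : ℝ)) * ∑ i, |(hA.sub hB).eigenvalues i| := by
  rw [← mul_sub, abs_mul, abs_of_nonneg (by positivity)]
  refine mul_le_mul_of_nonneg_left ?_ (by positivity)
  calc |∑ i, f (hA.eigenvalues i) - ∑ i, f (hB.eigenvalues i)|
      = |∑ k, (f (hA.eigenvalues₀ k) - f (hB.eigenvalues₀ k))| := by
        rw [hA.sum_comp_eigenvalues, hB.sum_comp_eigenvalues, Finset.sum_sub_distrib]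
    _ ≤ ∑ k, |f (hA.eigenvalues₀ k) - f (hB.eigenvalues₀ k)| := Finset.abs_sum_le_sum_abs _ _
    _ ≤ ∑ k, |hA.eigenvalues₀ k - hB.eigenvalues₀ k| := Finset.sum_le_sum fun k _ => by
        simpa [Real.dist_eq] using hf.dist_le_mul (hA.eigenvalues₀ k) (hB.eigenvalues₀ k)
    _ ≤ ∑ i, |(hA.sub hB).eigenvalues i| := hA.sum_abs_sub_eigenvalues₀_le hB
end
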